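/- (QFT under general linear transformation, split form) Let A ∈ GL(ℝ²) and f ∈ L²(ℝ²;ℍ) integrable. Then the QFT of x ↦ f(Ax) equals |det A⁻¹|·( f̂₋((A⁻¹)ᵀ u) + f̂₊(U₁ (A⁻¹)ᵀ U₁ u) ), where U₁ is the reflection (u,v) ↦ (-u,v) (reflection at the hyperplane normal to e₁), and f̂± are the QFTs of the split parts f± = (1/2)(f ± i f j). -/

import Mathlib

open Quaternion MeasureTheory Real Matrix

noncomputable def qi : ℍ[ℝ] := ⟨0,1,0,0⟩
noncomputable def qj : ℍ[ℝ] := ⟨0,0,1,0⟩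
noncomputable def qk : ℍ[ℝ] := ⟨0,0,0,1⟩
/-- exp(θ·v) = cos θ + v sin θ for a quaternion unit v with v² = -1. -/
noncomputable def qexp (v : ℍ[ℝ]) (θ : ℝ) : ℍ[ℝ] := (Real.cos θ : ℍ[ℝ]) + Real.sin θ • v

/-- The two-sided quaternion Fourier transform. -/
noncomputable def QFT (f : ℝ × ℝ → ℍ[ℝ]) (u v : ℝ) : ℍ[ℝ] :=
  ∫ p : ℝ × ℝ, qexp qi (-(p.1 * u)) * f p * qexp qj (-(p.2 * v))

/-- Action of a 2×2 real matrix on ℝ². -/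
def act (M : Matrix (Fin 2) (Fin 2) ℝ) (p : ℝ × ℝ) : ℝ × ℝ :=
  (M 0 0 * p.1 + M 0 1 * p.2, M 1 0 * p.1 + M 1 1 * p.2)

/-- Reflection at the hyperplane (line) normal to e₁. -/
def refl1 (p : ℝ × ℝ) : ℝ × ℝ := (-p.1, p.2)

/-!
The split parts `x₊ = splitPlus x`, `x₋ = splitMinus x` of a quaternion satisfy
`qi * x₋ * qj = -x₋` and `qi * x₊ * qj = x₊`, so a left factor `exp(qi θ)` passes through `x₋`
as `exp(qj θ)` and through `x₊` as `exp(-qj θ)`. After the substitution `q = A p` the two phases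
`(A⁻¹ q)₁ u` and `(A⁻¹ q)₂ v` each mix both coordinates of `q`; moving the `q₂`-part of the left
phase to the right and the `q₁`-part of the right phase to the left separates the variables
again, with frequencies `(A⁻¹)ᵀ (u, v)` for `x₋` and `U₁ (A⁻¹)ᵀ U₁ (u, v)` for `x₊` (the sign
flips of `U₁` record the sign in `exp(-qj θ)`).
-/

@[simp] lemma qi_re : qi.re = 0 := rfl
@[simp] lemma qi_imI : qi.imI = 1 := rfl
@[simp] lemma qi_imJ : qi.imJ = 0 := rfl
@[simp] lemma qi_imK : qi.imK = 0 := rfl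
@[simp] lemma qj_re : qj.re = 0 := rfl
@[simp] lemma qj_imI : qj.imI = 0 := rfl
@[simp] lemma qj_imJ : qj.imJ = 1 := rfl
@[simp] lemma qj_imK : qj.imK = 0 := rfl

lemma qj_mul_qj : qj * qj = -1 := by ext <;> simp

lemma normSq_qi : normSq qi = 1 := by simp [normSq_def']

lemma normSq_qj : normSq qj = 1 := by simp [normSq_def']

section qexp

variable {v : ℍ[ℝ]}

lemma qexp_add (hv : v * v = -1) (a b : ℝ) : qexp v (a + b) = qexp v a * qexp v b := by
  have hcoe : ∀ r : ℝ, (r : ℍ[ℝ]) = r • 1 := fun r => by rw [← coe_mul_eq_smul, mul_one]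
  simp only [qexp, hcoe, add_mul, mul_add, smul_mul_smul_comm, one_mul, mul_one, hv, cos_add,
    sin_add]
  module

lemma norm_qexp (hre : v.re = 0) (hv : normSq v = 1) (θ : ℝ) : ‖qexp v θ‖ = 1 := by
  have h : normSq (qexp v θ) = 1 := by
    rw [normSq_def', hre] at hv
    rw [normSq_def']
    simp only [qexp, re_add, re_coe, re_smul, imI_add, imI_coe, imI_smul, imJ_add, imJ_coe,
      imJ_smul, imK_add, imK_coe, imK_smul, smul_eq_mul, hre]
    linear_combination (sin θ ^ 2) * hv + sin_sq_add_cos_sq θ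
  rw [normSq_eq_norm_mul_self] at h
  nlinarith [norm_nonneg (qexp v θ)]

lemma continuous_qexp (v : ℍ[ℝ]) : Continuous (qexp v) :=
  (Quaternion.continuous_coe.comp continuous_cos).add (continuous_sin.smul continuous_const)

end qexp

noncomputable def splitPlus (x : ℍ[ℝ]) : ℍ[ℝ] := (2:ℝ)⁻¹ • (x + qi * x * qj)

noncomputable def splitMinus (x : ℍ[ℝ]) : ℍ[ℝ] := (2:ℝ)⁻¹ • (x - qi * x * qj)

lemma splitPlus_add_splitMinus (x : ℍ[ℝ]) : splitPlus x + splitMinus x = x := by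
  simp only [splitPlus, splitMinus]
  module

lemma qexp_qi_mul_splitMinus (θ : ℝ) (x : ℍ[ℝ]) :
    qexp qi θ * splitMinus x = splitMinus x * qexp qj θ := by
  ext <;> simp [qexp, splitMinus] <;> ring

lemma qexp_qi_mul_splitPlus (θ : ℝ) (x : ℍ[ℝ]) :
    qexp qi θ * splitPlus x = splitPlus x * qexp qj (-θ) := by
  ext <;> simp [qexp, splitPlus] <;> ring

lemma qexp_qi_mul_mul_qexp_qj_eq_split (x : ℍ[ℝ]) (a₁ a₂ b₁ b₂ : ℝ) :
    qexp qi (a₁ + a₂) * x * qexp qj (b₁ + b₂) =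
      qexp qi (a₁ + b₁) * splitMinus x * qexp qj (a₂ + b₂)
        + qexp qi (a₁ - b₁) * splitPlus x * qexp qj (b₂ - a₂) := by
  have hminus (a b : ℝ) :
      qexp qi a * splitMinus x * qexp qj b = splitMinus x * qexp qj (a + b) := by
    rw [qexp_qi_mul_splitMinus, mul_assoc, qexp_add qj_mul_qj]
  have hplus (a b : ℝ) :
      qexp qi a * splitPlus x * qexp qj b = splitPlus x * qexp qj (-a + b) := by
    rw [qexp_qi_mul_splitPlus, mul_assoc, qexp_add qj_mul_qj]
  conv_lhs => rw [← splitPlus_add_splitMinus x]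
  simp only [mul_add, add_mul, hminus, hplus]
  rw [add_comm]
  congr 3 <;> ring

lemma act_eq_toLin (A : Matrix (Fin 2) (Fin 2) ℝ) (p : ℝ × ℝ) :
    act A p = Matrix.toLin (Module.Basis.finTwoProd ℝ) (Module.Basis.finTwoProd ℝ) A p := by
  simp [Matrix.toLin_apply, Matrix.mulVec, dotProduct, act]

lemma act_mul (M N : Matrix (Fin 2) (Fin 2) ℝ) (p : ℝ × ℝ) :
    act (M * N) p = act M (act N p) := by
  simp only [act, Matrix.mul_apply, Fin.sum_univ_two, Prod.mk.injEq]
  constructor <;> ring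

lemma act_one (p : ℝ × ℝ) : act 1 p = p := by
  simp [act]

lemma act_inv_act {A : Matrix (Fin 2) (Fin 2) ℝ} (hA : IsUnit A.det) (p : ℝ × ℝ) :
    act A⁻¹ (act A p) = p := by
  rw [← act_mul, nonsing_inv_mul A hA, act_one]

lemma integral_comp_linearMap {E F : Type*} [NormedAddCommGroup E] [NormedSpace ℝ E]
    [MeasurableSpace E] [BorelSpace E] [FiniteDimensional ℝ E] [NormedAddCommGroup F]
    [NormedSpace ℝ F] (μ : Measure E) [μ.IsAddHaarMeasure] {L : E →ₗ[ℝ] E}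
    (hL : LinearMap.det L ≠ 0) (g : E → F) :
    ∫ x, g (L x) ∂μ = |(LinearMap.det L)⁻¹| • ∫ x, g x ∂μ := by
  have hunit : IsUnit (LinearMap.det L) := isUnit_iff_ne_zero.2 hL
  let e := (LinearMap.equivOfIsUnitDet hunit).toContinuousLinearEquiv
  have he : ⇑e.toHomeomorph = ⇑L := funext (LinearMap.equivOfIsUnitDet_apply hunit)
  calc ∫ x, g (L x) ∂μ = ∫ y, g y ∂(Measure.map L μ) := by
        rw [← he]
        exact (e.toHomeomorph.measurableEmbedding.integral_map g).symm
    _ = |(LinearMap.det L)⁻¹| • ∫ x, g x ∂μ := by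
        rw [Measure.map_linearMap_addHaar_eq_smul_addHaar μ hL, integral_smul_measure,
          ENNReal.toReal_ofReal (abs_nonneg _)]

lemma integral_comp_act {A : Matrix (Fin 2) (Fin 2) ℝ} (hA : A.det ≠ 0) (g : ℝ × ℝ → ℍ[ℝ]) :
    ∫ p, g (act A p) = |A⁻¹.det| • ∫ p, g p := by
  have hdet := LinearMap.det_toLin (Module.Basis.finTwoProd ℝ) A
  simp only [act_eq_toLin]
  rw [integral_comp_linearMap volume (hdet ▸ hA), hdet, det_nonsing_inv, Ring.inverse_eq_inv']

lemma QFT_comp_act {A : Matrix (Fin 2) (Fin 2) ℝ} (hA : IsUnit A.det) (f : ℝ × ℝ → ℍ[ℝ])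
    (u v : ℝ) :
    QFT (fun p => f (act A p)) u v = |A⁻¹.det| •
      ∫ q, qexp qi (-((act A⁻¹ q).1 * u)) * f q * qexp qj (-((act A⁻¹ q).2 * v)) := by
  rw [← integral_comp_act hA.ne_zero]
  simp only [QFT, act_inv_act hA]

lemma qexp_act_mul_mul_qexp_act_eq_split (B : Matrix (Fin 2) (Fin 2) ℝ) (x : ℍ[ℝ]) (q : ℝ × ℝ)
    (u v : ℝ) :
    let wm := act Bᵀ (u, v)
    let wp := refl1 (act Bᵀ (refl1 (u, v)))
    qexp qi (-((act B q).1 * u)) * x * qexp qj (-((act B q).2 * v)) =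
      qexp qi (-(q.1 * wm.1)) * splitMinus x * qexp qj (-(q.2 * wm.2))
        + qexp qi (-(q.1 * wp.1)) * splitPlus x * qexp qj (-(q.2 * wp.2)) := by
  simp only [act, refl1, transpose_apply]
  convert qexp_qi_mul_mul_qexp_qj_eq_split x (-(B 0 0 * q.1 * u)) (-(B 0 1 * q.2 * u))
    (-(B 1 0 * q.1 * v)) (-(B 1 1 * q.2 * v)) using 5 <;> ring

lemma integrable_qexp_qi_mul_mul_qexp_qj {α : Type*} [MeasurableSpace α] {μ : Measure α}
    {g : α → ℍ[ℝ]} (hg : Integrable g μ) {a b : α → ℝ} (ha : Measurable a) (hb : Measurable b) :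
    Integrable (fun x => qexp qi (a x) * g x * qexp qj (b x)) μ := by
  have hmeas : AEStronglyMeasurable (fun x => qexp qi (a x) * g x * qexp qj (b x)) μ :=
    (((continuous_qexp qi).comp_aestronglyMeasurable ha.aestronglyMeasurable).mul hg.1).mul
      ((continuous_qexp qj).comp_aestronglyMeasurable hb.aestronglyMeasurable)
  refine hg.norm.mono' hmeas (.of_forall fun x => ?_)
  rw [norm_mul, norm_mul, norm_qexp qi_re normSq_qi, norm_qexp qj_re normSq_qj, one_mul, mul_one]

theorem QFT_GL_transform (f : ℝ × ℝ → ℍ[ℝ]) (A : Matrix (Fin 2) (Fin 2) ℝ)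
    (hA : IsUnit A.det) (u v : ℝ)
    (hf : Integrable f) :
    let fp : ℝ × ℝ → ℍ[ℝ] := fun p => (2:ℝ)⁻¹ • (f p + qi * f p * qj)
    let fm : ℝ × ℝ → ℍ[ℝ] := fun p => (2:ℝ)⁻¹ • (f p - qi * f p * qj)
    let wm : ℝ × ℝ := act (A⁻¹ᵀ) (u, v)
    let wp : ℝ × ℝ := refl1 (act (A⁻¹ᵀ) (refl1 (u, v)))
    QFT (fun p => f (act A p)) u v =
      |A⁻¹.det| • (QFT fm wm.1 wm.2 + QFT fp wp.1 wp.2) := by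
  intro fp fm wm wp
  have hfm : Integrable fm := (hf.sub ((hf.const_mul qi).mul_const qj)).smul (2:ℝ)⁻¹
  have hfp : Integrable fp := (hf.add ((hf.const_mul qi).mul_const qj)).smul (2:ℝ)⁻¹
  rw [QFT_comp_act hA, QFT, QFT, ← integral_add
    (integrable_qexp_qi_mul_mul_qexp_qj hfm (by fun_prop) (by fun_prop))
    (integrable_qexp_qi_mul_mul_qexp_qj hfp (by fun_prop) (by fun_prop))]
  congr 1
  exact integral_congr_ae
    (.of_forall fun q => qexp_act_mul_mul_qexp_act_eq_split A⁻¹ (f q) q u v)
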